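/- Assume (as a hypothesis) Zhang's theorem in the arithmetic-progression form: for k_0-element admissible H = {h_1,...,h_{k_0}} and q ≥ 1 with gcd(q, h_1···h_{k_0}) = 1, there are infinitely many n such that {qn + h_1, ..., qn + h_{k_0}} contains two primes. Then for any b, q with 0 ≤ b < q and gcd(b, q) = 1, there exist infinitely many pairs of primes P < Q, both congruent to b modulo q, with (Q − P)/q bounded by a constant depending only on an admissible k_0-tuple (e.g., Q − P ≤ q · (h_{k_0} − h_1)). -/

import Mathlib

/-- A finite set of natural numbers is admissible if for every prime `p`, its
elements occupy fewer than `p` residue classes modulo `p`. -/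
def AdmissibleN (H : Finset ℕ) : Prop :=
  ∀ p : ℕ, p.Prime → (H.image (Nat.cast : ℕ → ZMod p)).card < p

/-!
Apply the hypothesis to the tuple `b + q + q h`, `h ∈ H0`: it is admissible with `H0`, positive,
and prime to `q` because `b` is. Each of the infinitely many `n` it provides yields two primes
`q n + b + q + q h = b + q (n + h + 1)` in the class of `b` mod `q`, differing by `q` times a
difference of two elements of `H0`.
-/

/-- A map `x ↦ a + q x` is either constant (when `p ∣ q`) or injective modulo `p`. -/
theorem AdmissibleN.image_add_mul {H : Finset ℕ} (hH : AdmissibleN H) (a q : ℕ) :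
    AdmissibleN (H.image fun h => a + q * h) := by
  intro p hp
  have : Fact p.Prime := ⟨hp⟩
  rw [Finset.image_image]
  by_cases hpq : (q : ZMod p) = 0
  · have hconst : ((↑) ∘ fun h => a + q * h : ℕ → ZMod p) = fun _ => (a : ZMod p) := by
      funext h
      simp [hpq]
    rw [hconst]
    exact (Finset.card_le_one.mpr (by simp)).trans_lt hp.one_lt
  · have hcomp : ((↑) ∘ fun h => a + q * h : ℕ → ZMod p) =
        (fun x : ZMod p => a + q * x) ∘ (↑) := by
      funext h
      simp
    have hinj : Function.Injective fun x : ZMod p => a + q * x :=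
      (add_right_injective _).comp (mul_right_injective₀ hpq)
    rw [hcomp, ← Finset.image_image, Finset.card_image_of_injective _ hinj]
    exact hH p hp

theorem Finset.exists_lt_of_two_le_card_filter {α : Type*} [LinearOrder α] {s : Finset α}
    {p : α → Prop} [DecidablePred p] (h : 2 ≤ (s.filter p).card) :
    ∃ x ∈ s, ∃ y ∈ s, x < y ∧ p x ∧ p y := by
  obtain ⟨x, hx, y, hy, hxy⟩ := Finset.one_lt_card.mp h
  rw [Finset.mem_filter] at hx hy
  rcases hxy.lt_or_gt with hlt | hgt
  · exact ⟨x, hx.1, y, hy.1, hlt, hx.2, hy.2⟩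
  · exact ⟨y, hy.1, x, hx.1, hgt, hy.2, hx.2⟩

theorem Finset.exists_lt_of_two_le_card_filter_image {α β : Type*} [LinearOrder α]
    [LinearOrder β] {s : Finset α} {f : α → β} (hf : StrictMono f) {p : β → Prop}
    [DecidablePred p] (h : 2 ≤ ((s.image f).filter p).card) :
    ∃ x ∈ s, ∃ y ∈ s, x < y ∧ p (f x) ∧ p (f y) := by
  rw [Finset.filter_image, Finset.card_image_of_injective _ hf.injective] at h
  simpa using Finset.exists_lt_of_two_le_card_filter h

theorem bounded_gaps_in_progressions_general (k0 : ℕ)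
    (zhang : ∀ H : Finset ℕ, H.card = k0 → (∀ h ∈ H, 0 < h) → AdmissibleN H →
      ∀ q : ℕ, 1 ≤ q → Nat.Coprime q (∏ h ∈ H, h) →
        {n : ℕ | 2 ≤ (H.filter (fun h => Nat.Prime (q * n + h))).card}.Infinite)
    (H0 : Finset ℕ) (hcard : H0.card = k0) (hne : H0.Nonempty)
    (hH0 : AdmissibleN H0) :
    ∀ b q : ℕ, b < q → Nat.Coprime b q →
      {P : ℕ | ∃ Q : ℕ, P.Prime ∧ Q.Prime ∧ P < Q ∧ P % q = b ∧ Q % q = b ∧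
        Q - P ≤ q * (H0.max' hne - H0.min' hne)}.Infinite := by
  intro b q hbq hcop
  have hq : 0 < q := (Nat.zero_le b).trans_lt hbq
  set f : ℕ → ℕ := fun h => b + q + q * h with hf_def
  have hf : StrictMono f := fun x y hxy => by
    simp only [hf_def]
    gcongr
  have hzhang := zhang (H0.image f) (by rw [Finset.card_image_of_injective _ hf.injective, hcard])
    (Finset.forall_mem_image.2 fun _ _ => by simp only [hf_def]; omega)
    (hH0.image_add_mul (b + q) q) q hq
    (Nat.Coprime.prod_right <| Finset.forall_mem_image.2 fun h _ => by
      show Nat.Coprime q (b + q + q * h)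
      rw [add_assoc, ← mul_one_add, Nat.coprime_add_mul_left_right]
      exact hcop.symm)
  refine Set.infinite_of_forall_exists_gt fun a => ?_
  obtain ⟨n, hn, han⟩ := hzhang.exists_gt a
  obtain ⟨h1, hh1, h2, hh2, hlt, hp1, hp2⟩ := Finset.exists_lt_of_two_le_card_filter_image hf hn
  have hprog : ∀ h, q * n + f h = b + q * (n + h + 1) := fun h => by simp only [hf_def]; ring
  rw [hprog] at hp1 hp2
  refine ⟨_, ⟨_, hp1, hp2, ?_, ?_, ?_, ?_⟩, ?_⟩
  · gcongr
  · rw [Nat.add_mul_mod_self_left, Nat.mod_eq_of_lt hbq]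
  · rw [Nat.add_mul_mod_self_left, Nat.mod_eq_of_lt hbq]
  · rw [Nat.add_sub_add_left, ← Nat.mul_sub]
    have := H0.min'_le _ hh1
    have := H0.le_max' _ hh2
    exact Nat.mul_le_mul_left q (by omega)
  · nlinarith

theorem bounded_gaps_in_progressions (k0 : ℕ)
    (zhang : ∀ H : Finset ℕ, H.card = k0 → (∀ h ∈ H, 0 < h) → AdmissibleN H →
      ∀ q : ℕ, 1 ≤ q → Nat.Coprime q (∏ h ∈ H, h) →
        {n : ℕ | 2 ≤ (H.filter (fun h => Nat.Prime (q * n + h))).card}.Infinite)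
    (H0 : Finset ℕ) (hcard : H0.card = k0) (hne : H0.Nonempty)
    (hpos : ∀ h ∈ H0, 0 < h) (hH0 : AdmissibleN H0) :
    ∀ b q : ℕ, b < q → Nat.Coprime b q →
      {P : ℕ | ∃ Q : ℕ, P.Prime ∧ Q.Prime ∧ P < Q ∧ P % q = b ∧ Q % q = b ∧
        Q - P ≤ q * (H0.max' hne - H0.min' hne)}.Infinite :=
  bounded_gaps_in_progressions_general k0 zhang H0 hcard hne hH0
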